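/- Let a = cos(θ)e^{i(φ₁+φ₂)/2} and b = sin(θ)e^{i(φ₁−φ₂)/2} with sin(θ)cos(θ) ≠ 0, and let α = 1/√2, β = e^{iξ}/√2. Then aα·conj(bβ) + conj(aα)·bβ = 0 if and only if φ₂ ≡ π/2 + ξ (mod π). -/

import Mathlib

open Real Complex ComplexConjugate

/-!
Since `conj (a α) · b β` is the conjugate of `a α · conj (b β)`, the left-hand side is twice the real
part of `a α · conj (b β) = (sin θ cos θ / 2) e^{i(φ₂ - ξ)}`, i.e. `sin θ cos θ cos (φ₂ - ξ)`.
As `sin θ cos θ ≠ 0`, it vanishes exactly when `cos (φ₂ - ξ) = 0`.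
-/

theorem Complex.mul_conj_add_conj_mul (z w : ℂ) :
    z * conj w + conj z * w = 2 * ((z * conj w).re : ℂ) := by
  have h : conj z * w = conj (z * conj w) := by rw [map_mul, Complex.conj_conj]
  rw [h, Complex.add_conj]
  push_cast
  ring

theorem Complex.re_ofReal_mul_exp_mul_conj (r s x y : ℝ) :
    ((r * exp (x * I)) * conj (s * exp (y * I))).re = r * s * Real.cos (x - y) := by
  have h : (r * exp (x * I)) * conj (s * exp (y * I)) = (r * s : ℝ) * exp ((x - y : ℝ) * I) := by
    simp only [map_mul, Complex.conj_ofReal, ← Complex.exp_conj, Complex.conj_I]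
    rw [mul_mul_mul_comm, ← Complex.exp_add]
    push_cast
    ring_nf
  rw [h, Complex.re_ofReal_mul, Complex.exp_ofReal_mul_I_re]

theorem Real.cos_sub_eq_zero_iff (x y : ℝ) :
    Real.cos (x - y) = 0 ↔ ∃ k : ℤ, x = π / 2 + y + k * π := by
  rw [Real.cos_eq_zero_iff]
  exact exists_congr fun k => by constructor <;> intro h <;> linarith

theorem symmetry_condition (θ φ₁ φ₂ ξ : ℝ)
    (hθ : Real.sin θ * Real.cos θ ≠ 0)
    (a : ℂ) (ha : a = (Real.cos θ : ℂ) * Complex.exp (Complex.I * ((φ₁ + φ₂) / 2)))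
    (b : ℂ) (hb : b = (Real.sin θ : ℂ) * Complex.exp (Complex.I * ((φ₁ - φ₂) / 2)))
    (α : ℂ) (hα : α = 1 / Real.sqrt 2)
    (β : ℂ) (hβ : β = Complex.exp (Complex.I * ξ) / Real.sqrt 2) :
    a * α * (starRingEnd ℂ) (b * β) + (starRingEnd ℂ) (a * α) * (b * β) = 0 ↔
      ∃ k : ℤ, φ₂ = π / 2 + ξ + k * π := by
  have haα : a * α = (Real.cos θ / √2 : ℝ) * exp (((φ₁ + φ₂) / 2 : ℝ) * I) := by
    rw [ha, hα]; push_cast; ring_nf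
  have hbβ : b * β = (Real.sin θ / √2 : ℝ) * exp (((φ₁ - φ₂) / 2 + ξ : ℝ) * I) := by
    rw [hb, hβ]; push_cast
    rw [add_mul, Complex.exp_add]; ring_nf
  have hsum : a * α * conj (b * β) + conj (a * α) * (b * β)
      = (Real.sin θ * Real.cos θ * Real.cos (φ₂ - ξ) : ℝ) := by
    rw [Complex.mul_conj_add_conj_mul, haα, hbβ, Complex.re_ofReal_mul_exp_mul_conj]
    norm_cast
    rw [show (φ₁ + φ₂) / 2 - ((φ₁ - φ₂) / 2 + ξ) = φ₂ - ξ by ring]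
    field_simp
    rw [Real.sq_sqrt zero_le_two]
    ring
  rw [hsum, Complex.ofReal_eq_zero, mul_eq_zero, or_iff_right hθ, Real.cos_sub_eq_zero_iff]
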